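/- A linear map F(y) = Ay given by an invertible matrix A with at least two non-zero entries in each row does not preserve the order of dimensional values: there exist vectors s and t and a coordinate i such that s_i > t_i but (As)_i < (At)_i. -/
import Mathlib


/-- A linear map given by an invertible matrix with at least two non-zero entries in
each row does not preserve the order of dimensional values. -/
theorem rasp_not_order_preserving (d : ℕ) (hd : 1 ≤ d)
    (A : Matrix (Fin (d + 2)) (Fin (d + 2)) ℝ) (hA : IsUnit A)
    (hrows : ∀ i : Fin (d + 2), 1 < (Finset.univ.filter (fun j => A i j ≠ 0)).card) :
    ∃ (s t : Fin (d + 2) → ℝ) (i : Fin (d + 2)),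
      s i > t i ∧ A.mulVec s i < A.mulVec t i := by
  -- find j ≠ 0 in row 0 with A 0 j ≠ 0
  have hj : ∃ j : Fin (d + 2), j ≠ 0 ∧ A 0 j ≠ 0 := by
    by_contra h
    push_neg at h
    have hsub : (Finset.univ.filter (fun j => A 0 j ≠ 0)) ⊆ {0} := by
      intro j hjmem
      simp only [Finset.mem_filter] at hjmem
      simp only [Finset.mem_singleton]
      by_contra hj0
      exact hjmem.2 (h j hj0)
    have h1 := Finset.card_le_card hsub
    have h2 := hrows 0
    simp at h1
    simp only [ne_eq] at h1 h2
    omega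
  obtain ⟨j, hj0, hAj⟩ := hj
  set c : ℝ := (-(A 0 0) - 1) / (A 0 j) with hc
  refine ⟨fun m => if m = 0 then 1 else if m = j then c else 0, 0, 0, by simp, ?_⟩
  have h0 : A.mulVec (0 : Fin (d + 2) → ℝ) 0 = 0 := by simp
  rw [h0]
  have hsum : A.mulVec (fun m => if m = 0 then 1 else if m = j then c else 0) 0
      = A 0 0 * 1 + A 0 j * c := by
    unfold Matrix.mulVec dotProduct
    rw [Finset.sum_eq_add (0 : Fin (d + 2)) j (Ne.symm hj0)
      (fun k _ hk => by simp [hk.1, hk.2])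
      (fun h => absurd (Finset.mem_univ _) h)
      (fun h => absurd (Finset.mem_univ _) h)]
    simp [hj0, Ne.symm hj0]
  rw [hsum, hc]
  field_simp
  linarith
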